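/- arXiv:1707.05064 — 3 statements merged into one kernel-verified Lean document; each statement's English description precedes it below -/
import Mathlib

section
/- Let (F_n) be a filtration and let (e_n) be a positive integer-valued adapted process and (e_n^{(k)}) a nonnegative integer-valued adapted process with e_n^{(k)} ≤ e_n. Suppose that for every n, conditionally on F_{n-1}^{+} = σ(F_{n-1}, M_n) with M_n a positive-integer random variable independent of F_{n-1}, we have e_n = e_{n-1} + M_n and e_n^{(k)} = e_{n-1}^{(k)} + B_n where B_n | F_{n-1}^{+} ~ Binomial(M_n, e_{n-1}^{(k)}/e_{n-1}). Then ζ_n = e_n^{(k)}/e_n satisfies E[ζ_n | F_{n-1}] = ζ_{n-1}; that is, (ζ_n, F_n) is a nonnegative martingale, and hence converges almost surely to a random variable ζ^{(k)}. -/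
/-!
Conditionally on `𝒢 (n + 1)`, the increment `B = ek (n + 1) - ek n` is binomial with
parameters `M = M (n + 1)` and `ζ n = ek n / e n`, so
`E[(ek n + B) / (e n + M) | 𝒢 (n + 1)] = (ek n + M ζ n) / (e n + M) = ζ n`.
Since `ℱ n ≤ 𝒢 (n + 1)`, the tower property gives `E[ζ (n + 1) | ℱ n] = ζ n`, and a martingale
with values in `[0, 1]` converges almost surely.
-/

open MeasureTheory ProbabilityTheory Filter Finset
open scoped ENNReal

def binomialWeight (m i : ℕ) (t : ℝ) : ℝ := m.choose i * t ^ i * (1 - t) ^ (m - i)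

lemma binomialWeight_eq_zero_of_lt {m i : ℕ} (h : m < i) (t : ℝ) : binomialWeight m i t = 0 := by
  simp [binomialWeight, Nat.choose_eq_zero_of_lt h]

lemma sum_binomialWeight (m : ℕ) (t : ℝ) : ∑ i ∈ range (m + 1), binomialWeight m i t = 1 := by
  have h := add_pow t (1 - t) m
  rw [add_sub_cancel, one_pow] at h
  rw [h]
  exact sum_congr rfl fun i _ => by simp only [binomialWeight]; ring

lemma sum_mul_binomialWeight (m : ℕ) (t : ℝ) :
    ∑ i ∈ range (m + 1), (i : ℝ) * binomialWeight m i t = m * t := by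
  simpa [Polynomial.eval_finsetSum, bernsteinPolynomial, binomialWeight] using
    congrArg (Polynomial.eval t) (bernsteinPolynomial.sum_smul ℝ m)

lemma tsum_add_div_add_mul_binomialWeight {a E : ℕ} (h : a ≤ E) (m : ℕ) :
    ∑' i : ℕ, ((a : ℝ) + i) / (E + m) * binomialWeight m i (a / E) = a / E := by
  rw [tsum_eq_sum (s := range (m + 1)) fun i hi => by
    rw [binomialWeight_eq_zero_of_lt (by simpa using hi), mul_zero]]
  have hsum : ∑ i ∈ range (m + 1), ((a : ℝ) + i) / (E + m) * binomialWeight m i (a / E)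
      = (a * 1 + m * (a / E)) / (E + m) := by
    rw [← sum_mul_binomialWeight m (a / E), ← sum_binomialWeight m (a / E), mul_sum,
      ← sum_add_distrib, sum_div]
    exact sum_congr rfl fun i _ => by ring
  rcases Nat.eq_zero_or_pos E with rfl | hE
  · -- `a ≤ 0` forces `a = 0`, and then both sides vanish since `0 / 0 = 0`
    simp [Nat.le_zero.mp h] at hsum ⊢
    exact hsum
  · rw [hsum]
    field_simp

theorem condExp_comp_nat_ae_eq_tsum {Ω : Type*} {m m0 : MeasurableSpace Ω} {μ : Measure Ω}
    [IsFiniteMeasure μ] {D : Ω → ℕ} (hD : Measurable D) {f : ℕ → Ω → ℝ}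
    (hf : ∀ i, StronglyMeasurable[m] (f i)) (hfD : Integrable (fun ω => f (D ω) ω) μ) :
    μ[fun ω => f (D ω) ω | m] =ᵐ[μ] fun ω => ∑' i, f i ω * (μ⟦D ⁻¹' {i} | m⟧) ω := by
  set piece : ℕ → Ω → ℝ := fun i => (D ⁻¹' {i}).indicator (f i)
  have hlevel : ∀ i, MeasurableSet (D ⁻¹' {i}) := fun i => hD (measurableSet_singleton i)
  have hpiece_off : ∀ ω i, i ≠ D ω → piece i ω = 0 := fun ω i hi =>
    Set.indicator_of_notMem (fun h => hi h.symm) _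
  have hpiece_on : ∀ ω, piece (D ω) ω = f (D ω) ω := fun ω =>
    Set.indicator_of_mem (Set.mem_preimage.2 rfl) _
  have hpiece_int : ∀ i, Integrable (piece i) μ := fun i => by
    refine (hfD.indicator (hlevel i)).congr (ae_of_all _ fun ω => ?_)
    by_cases h : D ω = i <;> simp [piece, h]
  have hsplit : (fun ω => f (D ω) ω) = fun ω => ∑' i, piece i ω := funext fun ω => by
    rw [tsum_eq_single (D ω) (hpiece_off ω), hpiece_on]
  have hsummable : ∑' i, ∫⁻ ω, ‖piece i ω‖ₑ ∂μ ≠ ∞ := by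
    rw [← lintegral_tsum fun i => (hpiece_int i).aestronglyMeasurable.enorm]
    convert hfD.2.ne using 3 with ω
    rw [tsum_eq_single (D ω) fun i hi => by rw [hpiece_off ω i hi, enorm_zero], hpiece_on]
  have hpull : ∀ i, μ[piece i | m] =ᵐ[μ] f i * μ⟦D ⁻¹' {i} | m⟧ := fun i => by
    have hfactor : piece i = f i * (D ⁻¹' {i}).indicator 1 := by
      ext ω; by_cases h : D ω = i <;> simp [piece, h]
    rw [hfactor]
    exact condExp_mul_of_stronglyMeasurable_left (hf i) (hfactor ▸ hpiece_int i)
      ((integrable_const 1).indicator (hlevel i))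
  rw [hsplit]
  filter_upwards [condExp_tsum (m := m) (fun i => (hpiece_int i).aestronglyMeasurable) hsummable,
    ae_all_iff.2 hpull] with ω hω hpull_ω
  rw [hω]
  exact tsum_congr hpull_ω

lemma abs_natCast_div_le_one {a b : ℕ} (h : a ≤ b) : |(a : ℝ) / b| ≤ 1 := by
  rw [abs_of_nonneg (by positivity)]
  exact div_le_one_of_le₀ (by exact_mod_cast h) (by positivity)

lemma integrable_natCast_div {Ω : Type*} {m0 : MeasurableSpace Ω} {μ : Measure Ω}
    [IsFiniteMeasure μ] {X Y : Ω → ℕ} (hX : Measurable X) (hY : Measurable Y)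
    (h : ∀ ω, X ω ≤ Y ω) : Integrable (fun ω => (X ω : ℝ) / Y ω) μ :=
  .of_bound (by fun_prop : Measurable fun ω => (X ω : ℝ) / Y ω).aestronglyMeasurable 1
    (ae_of_all _ fun ω => abs_natCast_div_le_one (h ω))

theorem condExp_natCast_div_ae_eq_of_binomial_step {Ω : Type*} {m m0 : MeasurableSpace Ω}
    {μ : Measure Ω} [IsFiniteMeasure μ] (hm : m ≤ m0) {M e₀ k₀ e₁ k₁ : Ω → ℕ}
    (hM : Measurable[m] M) (he₀ : Measurable[m] e₀) (hk₀ : Measurable[m] k₀)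
    (hk₁ : Measurable k₁) (hk₁e₁ : ∀ ω, k₁ ω ≤ e₁ ω) (he₁ : ∀ ω, e₁ ω = e₀ ω + M ω)
    (hk₀k₁ : ∀ ω, k₀ ω ≤ k₁ ω) (hk₀e₀ : ∀ ω, k₀ ω ≤ e₀ ω)
    (hbinom : ∀ i : ℕ, μ⟦{ω | k₁ ω = k₀ ω + i} | m⟧ =ᵐ[μ]
      fun ω => binomialWeight (M ω) i (k₀ ω / e₀ ω)) :
    μ[fun ω => (k₁ ω : ℝ) / e₁ ω | m] =ᵐ[μ] fun ω => (k₀ ω : ℝ) / e₀ ω := by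
  set D : Ω → ℕ := fun ω => k₁ ω - k₀ ω
  set f : ℕ → Ω → ℝ := fun i ω => ((k₀ ω : ℝ) + i) / (e₀ ω + M ω)
  have hfD : (fun ω => f (D ω) ω) = fun ω => (k₁ ω : ℝ) / e₁ ω := funext fun ω => by
    simp only [f, D, he₁, Nat.cast_add, Nat.cast_sub (hk₀k₁ ω), add_sub_cancel]
  have hlevel : ∀ i, D ⁻¹' {i} = {ω | k₁ ω = k₀ ω + i} := fun i => by
    ext ω
    change k₁ ω - k₀ ω = i ↔ k₁ ω = k₀ ω + i
    have := hk₀k₁ ω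
    omega
  have hf : ∀ i, StronglyMeasurable[m] (f i) := fun i =>
    (by fun_prop : Measurable[m] (f i)).stronglyMeasurable
  have he₁meas : Measurable e₁ := by
    rw [show e₁ = fun ω => e₀ ω + M ω from funext he₁]
    exact (he₀.mono hm le_rfl).add (hM.mono hm le_rfl)
  have hcond := condExp_comp_nat_ae_eq_tsum (m := m) (μ := μ) (D := D)
    (hk₁.sub (hk₀.mono hm le_rfl)) hf (hfD ▸ integrable_natCast_div hk₁ he₁meas hk₁e₁)
  rw [hfD] at hcond
  filter_upwards [hcond, ae_all_iff.2 hbinom] with ω hω hbinom_ω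
  rw [hω]
  simp only [hlevel, hbinom_ω]
  exact tsum_add_div_add_mul_binomialWeight (hk₀e₀ ω) (M ω)

theorem MeasureTheory.Martingale.ae_tendsto_limitProcess_of_abs_le {Ω : Type*}
    {m0 : MeasurableSpace Ω} {μ : Measure Ω} [IsFiniteMeasure μ] {ℱ : Filtration ℕ m0}
    {f : ℕ → Ω → ℝ} (hf : Martingale f ℱ μ) {C : ℝ} (hC : ∀ n ω, |f n ω| ≤ C) :
    ∀ᵐ ω ∂μ, Tendsto (fun n => f n ω) atTop (nhds (ℱ.limitProcess f μ ω)) := by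
  refine hf.submartingale.ae_tendsto_limitProcess (R := (μ Set.univ * ENNReal.ofReal C).toNNReal)
    fun n => ?_
  rw [ENNReal.coe_toNNReal (by finiteness)]
  simpa using eLpNorm_le_of_ae_bound (p := 1) (μ := μ) (ae_of_all _ (hC n))

theorem edge_type_ratio_martingale_BA_general
    {Ω : Type*} {m0 : MeasurableSpace Ω} (μ : Measure Ω) [IsProbabilityMeasure μ]
    (ℱ : Filtration ℕ m0) (𝒢 : ℕ → MeasurableSpace Ω)
    (h𝒢₁ : ∀ n, ℱ n ≤ 𝒢 (n + 1)) (h𝒢₂ : ∀ n, 𝒢 (n + 1) ≤ ℱ (n + 1))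
    (M : ℕ → Ω → ℕ) (e ek : ℕ → Ω → ℕ)
    (hMmeas : ∀ n, Measurable[𝒢 (n + 1)] (M (n + 1)))
    (headapted : ∀ n, Measurable[ℱ n] (e n)) (hekadapted : ∀ n, Measurable[ℱ n] (ek n))
    (hle : ∀ n ω, ek n ω ≤ e n ω)
    (hestep : ∀ n ω, e (n + 1) ω = e n ω + M (n + 1) ω)
    (hekstep : ∀ n ω, ek n ω ≤ ek (n + 1) ω)
    (hbinom : ∀ n, ∀ i : ℕ,
      (μ⟦{ω | ek (n + 1) ω = ek n ω + i} | 𝒢 (n + 1)⟧) =ᵐ[μ] fun ω =>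
        ((M (n + 1) ω).choose i : ℝ) * ((ek n ω : ℝ) / (e n ω : ℝ)) ^ i *
          (1 - (ek n ω : ℝ) / (e n ω : ℝ)) ^ (M (n + 1) ω - i)) :
    (∀ n, μ[fun ω => (ek (n + 1) ω : ℝ) / (e (n + 1) ω : ℝ) | ℱ n]
        =ᵐ[μ] fun ω => (ek n ω : ℝ) / (e n ω : ℝ)) ∧
    Martingale (fun n ω => (ek n ω : ℝ) / (e n ω : ℝ)) ℱ μ ∧
    ∃ ζ : Ω → ℝ, ∀ᵐ ω ∂μ,
      Tendsto (fun n => (ek n ω : ℝ) / (e n ω : ℝ)) atTop (nhds (ζ ω)) := by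
  set ζ : ℕ → Ω → ℝ := fun n ω => (ek n ω : ℝ) / (e n ω : ℝ)
  have hζmeas : ∀ n, Measurable[ℱ n] (ζ n) := fun n => by
    have := headapted n; have := hekadapted n; fun_prop
  have hζint : ∀ n, Integrable (ζ n) μ := fun n =>
    integrable_natCast_div ((hekadapted n).mono (ℱ.le n) le_rfl)
      ((headapted n).mono (ℱ.le n) le_rfl) (hle n)
  have hcond : ∀ n, μ[ζ (n + 1) | ℱ n] =ᵐ[μ] ζ n := fun n => by
    have h𝒢 : 𝒢 (n + 1) ≤ m0 := (h𝒢₂ n).trans (ℱ.le (n + 1))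
    have hstep : μ[ζ (n + 1) | 𝒢 (n + 1)] =ᵐ[μ] ζ n :=
      condExp_natCast_div_ae_eq_of_binomial_step h𝒢 (hMmeas n)
        ((headapted n).mono (h𝒢₁ n) le_rfl) ((hekadapted n).mono (h𝒢₁ n) le_rfl)
        ((hekadapted (n + 1)).mono (ℱ.le (n + 1)) le_rfl) (hle (n + 1)) (hestep n)
        (hekstep n) (hle n) (hbinom n)
    calc μ[ζ (n + 1) | ℱ n] =ᵐ[μ] μ[μ[ζ (n + 1) | 𝒢 (n + 1)] | ℱ n] :=
          (condExp_condExp_of_le (h𝒢₁ n) h𝒢).symm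
      _ =ᵐ[μ] μ[ζ n | ℱ n] := condExp_congr_ae hstep
      _ = ζ n := condExp_of_stronglyMeasurable (ℱ.le n) (hζmeas n).stronglyMeasurable (hζint n)
  have hmart : Martingale ζ ℱ μ :=
    martingale_nat (fun n => (hζmeas n).stronglyMeasurable) hζint fun n => (hcond n).symm
  exact ⟨hcond, hmart, ℱ.limitProcess ζ μ,
    hmart.ae_tendsto_limitProcess_of_abs_le fun n ω => abs_natCast_div_le_one (hle n ω)⟩

/-- Edge-type ratio martingale in the generalized Barabási–Albert graph: at step `n+1`,
`M_{n+1}` new edges are added (`M_{n+1}` independent of `ℱ_n`), and the number of new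
type-`k` edges is, conditionally on `𝒢_{n+1} = σ(ℱ_n, M_{n+1})`, binomial with
parameters `M_{n+1}` and the current type-`k` edge proportion. Then the proportion
`ζ_n = e_n^{(k)} / e_n` satisfies `E[ζ_{n+1} | ℱ_n] = ζ_n`, is a nonnegative
martingale, and converges almost surely. -/
theorem edge_type_ratio_martingale_BA
    {Ω : Type*} {m0 : MeasurableSpace Ω} (μ : Measure Ω) [IsProbabilityMeasure μ]
    (ℱ : Filtration ℕ m0) (𝒢 : ℕ → MeasurableSpace Ω)
    (h𝒢₁ : ∀ n, ℱ n ≤ 𝒢 (n + 1)) (h𝒢₂ : ∀ n, 𝒢 (n + 1) ≤ ℱ (n + 1))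
    (M : ℕ → Ω → ℕ) (e ek : ℕ → Ω → ℕ)
    (hMmeas : ∀ n, Measurable[𝒢 (n + 1)] (M (n + 1)))
    (hMpos : ∀ n ω, 0 < M (n + 1) ω)
    (hMindep : ∀ n, Indep (MeasurableSpace.comap (M (n + 1)) inferInstance) (ℱ n) μ)
    (headapted : ∀ n, Measurable[ℱ n] (e n)) (hekadapted : ∀ n, Measurable[ℱ n] (ek n))
    (hepos : ∀ n ω, 0 < e n ω) (hle : ∀ n ω, ek n ω ≤ e n ω)
    (hestep : ∀ n ω, e (n + 1) ω = e n ω + M (n + 1) ω)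
    (hekstep : ∀ n ω, ek n ω ≤ ek (n + 1) ω)
    (hbinom : ∀ n, ∀ i : ℕ,
      (μ⟦{ω | ek (n + 1) ω = ek n ω + i} | 𝒢 (n + 1)⟧) =ᵐ[μ] fun ω =>
        ((M (n + 1) ω).choose i : ℝ) * ((ek n ω : ℝ) / (e n ω : ℝ)) ^ i *
          (1 - (ek n ω : ℝ) / (e n ω : ℝ)) ^ (M (n + 1) ω - i)) :
    (∀ n, μ[fun ω => (ek (n + 1) ω : ℝ) / (e (n + 1) ω : ℝ) | ℱ n]
        =ᵐ[μ] fun ω => (ek n ω : ℝ) / (e n ω : ℝ)) ∧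
    Martingale (fun n ω => (ek n ω : ℝ) / (e n ω : ℝ)) ℱ μ ∧
    ∃ ζ : Ω → ℝ, ∀ᵐ ω ∂μ,
      Tendsto (fun n => (ek n ω : ℝ) / (e n ω : ℝ)) atTop (nhds (ζ ω)) :=
  edge_type_ratio_martingale_BA_general μ ℱ 𝒢 h𝒢₁ h𝒢₂ M e ek hMmeas headapted hekadapted hle hestep
    hekstep hbinom
end

section
/- Let (F_n) be a filtration, let λ_n > 0 be a random variable independent of F_{n-1}, and set F_{n-1}^+ = σ(F_{n-1}, λ_n). Let e_{n-1} > 0 and e_{n-1}^{(k)} ≥ 0 be F_{n-1}-measurable with e_{n-1}^{(k)} ≤ e_{n-1}, and suppose Δ_n^{(k)} | F_{n-1}^+ ~ Poisson(λ_n · e_{n-1}^{(k)}/e_{n-1}) and Δ_n | F_{n-1}^+ ~ Poisson(λ_n) with Δ_n - Δ_n^{(k)} independent of Δ_n^{(k)} given F_{n-1}^+. If e_n = e_{n-1} + Δ_n and e_n^{(k)} = e_{n-1}^{(k)} + Δ_n^{(k)}, then E[e_n^{(k)}/e_n | F_{n-1}] = e_{n-1}^{(k)}/e_{n-1}; hence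 (e_n^{(k)}/e_n) is a nonnegative martingale and converges almost surely. -/
/-!
Conditionally on `𝒢 (n + 1)`, the numbers of new type-`k` edges and of other new edges are
independent Poisson variables with means `λ p` and `λ (1 - p)`, where `p = e_n^{(k)} / e_n` is
the current proportion. Equivalently, the total number `N` of new edges is Poisson(`λ`) and,
given `N`, the number of type-`k` ones is Binomial(`N`, `p`), so the expected new proportion
given `N` is `(e_n^{(k)} + N p) / (e_n + N) = p`. The tower property passes from `𝒢 (n + 1)` to
`ℱ n`, and a martingale with values in `[0, 1]` converges almost surely.
-/

open MeasureTheory ProbabilityTheory Filter Real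

section PoissonThinning

open Finset

theorem HasSum.sum_antidiagonal {A M : Type*} [AddCommMonoid A] [HasAntidiagonal A]
    [AddCommMonoid M] [TopologicalSpace M] [ContinuousAdd M] [RegularSpace M]
    {f : A × A → M} {a : M} (h : HasSum f a) :
    HasSum (fun n => ∑ ij ∈ antidiagonal n, f ij) a :=
  (HasAntidiagonal.sigmaAntidiagonalEquivProd.hasSum_iff.mpr h).sigma fun n => by
    rw [← Finset.sum_coe_sort]
    exact hasSum_fintype _

-- Mathlib's `poissonMeasure` takes a rate in `ℝ≥0`; the hypotheses are written with real rates.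
noncomputable def poissonWeight (r : ℝ) (n : ℕ) : ℝ := Real.exp (-r) * r ^ n / n.factorial

lemma poissonWeight_nonneg {r : ℝ} (hr : 0 ≤ r) (n : ℕ) : 0 ≤ poissonWeight r n := by
  unfold poissonWeight; positivity

lemma hasSum_poissonWeight {r : ℝ} (hr : 0 ≤ r) : HasSum (poissonWeight r) 1 :=
  hasSum_one_poissonMeasure ⟨r, hr⟩

lemma hasSum_poissonWeight_mul_poissonWeight {x y : ℝ} (hx : 0 ≤ x) (hy : 0 ≤ y) :
    HasSum (fun ij : ℕ × ℕ => poissonWeight x ij.1 * poissonWeight y ij.2) 1 := by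
  simpa using (hasSum_poissonWeight hx).mul (hasSum_poissonWeight hy)
    ((hasSum_poissonWeight hx).summable.mul_of_nonneg (hasSum_poissonWeight hy).summable
      (poissonWeight_nonneg hx) (poissonWeight_nonneg hy))

lemma poissonWeight_mul_poissonWeight {p q : ℝ} (hpq : p + q = 1) (L : ℝ) (i j : ℕ) :
    poissonWeight (L * p) i * poissonWeight (L * q) j
      = poissonWeight L (i + j) * ((i + j).choose i * p ^ i * q ^ j) := by
  have hfact : ((i + j).choose i * i.factorial * j.factorial : ℝ) = (i + j).factorial := by
    rw [Nat.choose_symm_add]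
    exact_mod_cast Nat.add_choose_mul_factorial_mul_factorial i j
  have hchoose : ((i + j).choose i : ℝ) ≠ 0 := by exact_mod_cast (Nat.choose_pos (by omega)).ne'
  have hexp : Real.exp (-(L * p)) * Real.exp (-(L * q)) = Real.exp (-L) := by
    rw [← Real.exp_add, ← neg_add, ← mul_add, hpq, mul_one]
  unfold poissonWeight
  rw [← hexp, ← hfact]
  field_simp
  ring

lemma sum_antidiagonal_choose_mul_pow_mul_pow {R : Type*} [CommSemiring R] (p q : R) (n : ℕ) :
    ∑ ij ∈ antidiagonal n, n.choose ij.1 * p ^ ij.1 * q ^ ij.2 = (p + q) ^ n := by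
  simp only [(Commute.all p q).add_pow', nsmul_eq_mul, mul_assoc]

lemma sum_antidiagonal_mul_choose_mul_pow_mul_pow {R : Type*} [CommRing R] (p q : R) (n : ℕ) :
    ∑ ij ∈ antidiagonal n, ij.1 * (n.choose ij.1 * p ^ ij.1 * q ^ ij.2)
      = n * p * (p + q) ^ (n - 1) := by
  cases n with
  | zero => simp
  | succ n =>
    have hterm : ∀ i j : ℕ, ((i + 1 : ℕ) : R) * ((n + 1).choose (i + 1) * p ^ (i + 1) * q ^ j)
        = (n + 1) * p * (n.choose i * p ^ i * q ^ j) := fun i j => by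
      have h' := congrArg (Nat.cast : ℕ → R) (Nat.add_one_mul_choose_eq n i)
      push_cast at h' ⊢
      linear_combination (-(p ^ (i + 1) * q ^ j)) * h'
    rw [Nat.sum_antidiagonal_succ]
    simp only [hterm, ← mul_sum, sum_antidiagonal_choose_mul_pow_mul_pow]
    push_cast
    ring

lemma sum_antidiagonal_ratio_mul_poissonWeight {a c : ℝ} (hc : 0 < c) (L : ℝ) (n : ℕ) :
    ∑ ij ∈ antidiagonal n, (a + ij.1) / (c + ij.1 + ij.2) *
      (poissonWeight (L * (a / c)) ij.1 * poissonWeight (L * (1 - a / c)) ij.2)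
        = a / c * poissonWeight L n := by
  set p := a / c
  have hbinomial :
      ∑ ij ∈ antidiagonal n, (a + ij.1) * (n.choose ij.1 * p ^ ij.1 * (1 - p) ^ ij.2)
        = a + n * p := by
    simp only [add_mul, sum_add_distrib, ← mul_sum, sum_antidiagonal_choose_mul_pow_mul_pow,
      sum_antidiagonal_mul_choose_mul_pow_mul_pow, add_sub_cancel, one_pow, mul_one]
  calc _ = poissonWeight L n / (c + n) *
        ∑ ij ∈ antidiagonal n, (a + ij.1) * (n.choose ij.1 * p ^ ij.1 * (1 - p) ^ ij.2) := by
        rw [mul_sum]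
        refine sum_congr rfl fun ij hij => ?_
        rw [HasAntidiagonal.mem_antidiagonal] at hij
        rw [poissonWeight_mul_poissonWeight (add_sub_cancel p 1), hij, add_assoc,
          ← Nat.cast_add, hij]
        ring
    _ = p * poissonWeight L n := by
        have hpc : p * c = a := div_mul_cancel₀ a hc.ne'
        rw [hbinomial]
        field_simp
        linear_combination (-poissonWeight L n) * hpc

theorem hasSum_ratio_mul_poissonWeight {a c L : ℝ} (ha : 0 ≤ a) (hac : a ≤ c) (hc : 0 < c)
    (hL : 0 ≤ L) :
    HasSum (fun ij : ℕ × ℕ => (a + ij.1) / (c + ij.1 + ij.2) *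
      (poissonWeight (L * (a / c)) ij.1 * poissonWeight (L * (1 - a / c)) ij.2)) (a / c) := by
  have hp : 0 ≤ L * (a / c) := mul_nonneg hL (div_nonneg ha hc.le)
  have hq : 0 ≤ L * (1 - a / c) := mul_nonneg hL (sub_nonneg.mpr ((div_le_one hc).mpr hac))
  have hsummable : Summable fun ij : ℕ × ℕ => (a + ij.1) / (c + ij.1 + ij.2) *
      (poissonWeight (L * (a / c)) ij.1 * poissonWeight (L * (1 - a / c)) ij.2) := by
    refine (hasSum_poissonWeight_mul_poissonWeight hp hq).summable.of_nonneg_of_le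
      (fun ij => ?_) (fun ij => ?_)
    · have := poissonWeight_nonneg hp ij.1
      have := poissonWeight_nonneg hq ij.2
      positivity
    · refine mul_le_of_le_one_left (mul_nonneg (poissonWeight_nonneg hp _)
        (poissonWeight_nonneg hq _)) ((div_le_one (by positivity)).mpr ?_)
      linarith [(Nat.cast_nonneg ij.2 : (0 : ℝ) ≤ ij.2)]
  have hmean : HasSum (fun n => a / c * poissonWeight L n) (a / c) := by
    simpa using (hasSum_poissonWeight hL).mul_left (a / c)
  refine hsummable.hasSum_iff.mpr (HasSum.unique ?_ hmean)
  simpa only [sum_antidiagonal_ratio_mul_poissonWeight hc] using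
    hsummable.hasSum.sum_antidiagonal

end PoissonThinning

theorem measurable_of_eq_add {Ω : Type*} [MeasurableSpace Ω] {f g h : Ω → ℕ}
    (hf : Measurable f) (hh : Measurable h) (hfgh : ∀ ω, h ω = f ω + g ω) : Measurable g := by
  have hg : g = fun ω => h ω - f ω := funext fun ω => by rw [hfgh]; omega
  exact hg ▸ hh.sub hf

section ConditionalExpectation

variable {Ω : Type*} {m m0 : MeasurableSpace Ω} {μ : Measure Ω} [IsFiniteMeasure μ]

lemma setIntegral_inter_eq_setIntegral_mul_condExp (hm : m ≤ m0) {s A : Set Ω}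
    (hs : MeasurableSet[m] s) (hA : MeasurableSet A) {g : Ω → ℝ} (hg : StronglyMeasurable[m] g)
    {C : ℝ} (hgC : ∀ ω, ‖g ω‖ ≤ C) :
    ∫ ω in s ∩ A, g ω ∂μ = ∫ ω in s, g ω * (μ⟦A | m⟧) ω ∂μ := by
  have hA_int : Integrable (A.indicator fun _ => (1 : ℝ)) μ := (integrable_const 1).indicator hA
  have hgA_int : Integrable (g * A.indicator fun _ => (1 : ℝ)) μ :=
    hA_int.bdd_mul (hg.mono hm).aestronglyMeasurable (ae_of_all _ hgC)
  calc ∫ ω in s ∩ A, g ω ∂μ = ∫ ω in s, (g * A.indicator fun _ => (1 : ℝ)) ω ∂μ := by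
        rw [← setIntegral_indicator hA]
        congr 1 with ω
        by_cases hω : ω ∈ A <;> simp [hω]
    _ = ∫ ω in s, μ[g * A.indicator fun _ => (1 : ℝ) | m] ω ∂μ :=
        (setIntegral_condExp hm hgA_int hs).symm
    _ = ∫ ω in s, g ω * (μ⟦A | m⟧) ω ∂μ :=
        integral_congr_ae (ae_restrict_of_ae
          (condExp_mul_of_stronglyMeasurable_left hg hgA_int hA_int))

theorem condExp_eq_of_fiberwise_hasSum {ι : Type*} [Countable ι] [MeasurableSpace ι]
    [MeasurableSingletonClass ι] (hm : m ≤ m0) {Y : Ω → ι} (hY : Measurable Y)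
    {f φ : Ω → ℝ} {g P : ι → Ω → ℝ} {C : ℝ} (hf : Integrable f μ)
    (hfg : ∀ ω, f ω = g (Y ω) ω) (hg : ∀ i, StronglyMeasurable[m] (g i))
    (hgC : ∀ i ω, ‖g i ω‖ ≤ C) (hP : ∀ i, μ⟦Y ⁻¹' {i} | m⟧ =ᵐ[μ] P i)
    (hP0 : ∀ i ω, 0 ≤ P i ω) (hP1 : ∀ ω, HasSum (fun i => P i ω) 1)
    (hφ : StronglyMeasurable[m] φ) (hgP : ∀ ω, HasSum (fun i => g i ω * P i ω) (φ ω)) :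
    μ[f | m] =ᵐ[μ] φ := by
  have hfiber : ∀ i, MeasurableSet (Y ⁻¹' {i}) := fun i => hY (measurableSet_singleton i)
  have hgP_le : ∀ i ω, ‖g i ω * P i ω‖ ≤ C * P i ω := fun i ω => by
    rw [norm_mul, Real.norm_of_nonneg (hP0 i ω)]
    exact mul_le_mul_of_nonneg_right (hgC i ω) (hP0 i ω)
  have hφ_int : Integrable φ μ := .of_bound (hφ.mono hm).aestronglyMeasurable C <| ae_of_all _
    fun ω => by simpa using (hgP ω).norm_le_of_bounded ((hP1 ω).mul_left C) (hgP_le · ω)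
  refine (ae_eq_condExp_of_forall_setIntegral_eq hm hf (fun s _ _ => hφ_int.integrableOn)
    (fun s hs _ => ?_) hφ.aestronglyMeasurable).symm
  have hsum_φ : HasSum (fun i => ∫ ω in s, g i ω * P i ω ∂μ) (∫ ω in s, φ ω ∂μ) := by
    refine hasSum_integral_of_dominated_convergence (fun i ω => C * P i ω)
      (fun i => ((hg i).mono hm).aestronglyMeasurable.mul ?_) (fun i => ae_of_all _ (hgP_le i))
      (ae_of_all _ fun ω => ((hP1 ω).mul_left C).summable) ?_ (ae_of_all _ hgP)
    · exact (stronglyMeasurable_condExp.mono hm).aestronglyMeasurable.congr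
        (ae_restrict_of_ae (hP i))
    · simp only [fun ω => ((hP1 ω).mul_left C).tsum_eq, mul_one]
      exact integrable_const C
  have hsum_f : HasSum (fun i => ∫ ω in s ∩ Y ⁻¹' {i}, f ω ∂μ) (∫ ω in s, f ω ∂μ) := by
    have hcover : ⋃ i, s ∩ Y ⁻¹' {i} = s := by
      rw [← Set.inter_iUnion, ← Set.preimage_iUnion, Set.iUnion_of_singleton, Set.preimage_univ,
        Set.inter_univ]
    have := hasSum_integral_iUnion (μ := μ) (f := f) (fun i => (hm s hs).inter (hfiber i))
      (fun i j hij => ((pairwise_disjoint_fiber Y hij).mono Set.inter_subset_right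
        Set.inter_subset_right)) (by rw [hcover]; exact hf.integrableOn)
    rwa [hcover] at this
  refine hsum_φ.unique (hsum_f.congr_fun fun i => Eq.symm ?_)
  calc ∫ ω in s ∩ Y ⁻¹' {i}, f ω ∂μ = ∫ ω in s ∩ Y ⁻¹' {i}, g i ω ∂μ :=
        setIntegral_congr_fun ((hm s hs).inter (hfiber i)) fun ω hω => by
          rw [hfg, show Y ω = i from hω.2]
    _ = ∫ ω in s, g i ω * P i ω ∂μ := by
        rw [setIntegral_inter_eq_setIntegral_mul_condExp hm hs (hfiber i) (hg i) (hgC i)]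
        exact integral_congr_ae
          (ae_restrict_of_ae ((hP i).mono fun ω hω => congrArg (g i ω * ·) hω))

theorem condExp_eq_of_condExp_eq_of_le {m' : MeasurableSpace Ω} (hm' : m' ≤ m) (hm : m ≤ m0)
    {f g : Ω → ℝ} (hg : StronglyMeasurable[m'] g) (hg_int : Integrable g μ)
    (hfg : μ[f | m] =ᵐ[μ] g) : μ[f | m'] =ᵐ[μ] g :=
  calc μ[f | m'] =ᵐ[μ] μ[μ[f | m] | m'] := (condExp_condExp_of_le hm' hm).symm
    _ =ᵐ[μ] μ[g | m'] := condExp_congr_ae hfg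
    _ = g := condExp_of_stronglyMeasurable (hm'.trans hm) hg hg_int

theorem Submartingale.exists_ae_tendsto_of_norm_le {ℱ : Filtration ℕ m0} {f : ℕ → Ω → ℝ}
    (hf : Submartingale f ℱ μ) {C : ℝ} (hC : ∀ n ω, ‖f n ω‖ ≤ C) :
    ∃ ζ : Ω → ℝ, ∀ᵐ ω ∂μ, Tendsto (fun n => f n ω) atTop (nhds (ζ ω)) := by
  refine ⟨ℱ.limitProcess f μ,
    hf.ae_tendsto_limitProcess (R := (eLpNorm (fun _ => C) 1 μ).toNNReal) fun n => ?_⟩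
  rw [ENNReal.coe_toNNReal (memLp_const C).eLpNorm_ne_top]
  exact eLpNorm_mono_real (hC n)

theorem condExp_ratio_of_poisson_thinning (hm : m ≤ m0) {L : Ω → ℝ} {a c a' c' D Dk : Ω → ℕ}
    (hL0 : ∀ ω, 0 ≤ L ω) (ha : Measurable[m] a) (hc : Measurable[m] c)
    (hc0 : ∀ ω, 0 < c ω) (hac : ∀ ω, a ω ≤ c ω) (ha' : Measurable a') (hc' : Measurable c')
    (ha'_eq : ∀ ω, a' ω = a ω + Dk ω) (hc'_eq : ∀ ω, c' ω = c ω + D ω)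
    (hDkD : ∀ ω, Dk ω ≤ D ω)
    (hpois : ∀ i j : ℕ, μ⟦{ω | Dk ω = i ∧ D ω - Dk ω = j} | m⟧ =ᵐ[μ] fun ω =>
      poissonWeight (L ω * (a ω / c ω)) i * poissonWeight (L ω * (1 - a ω / c ω)) j) :
    μ[fun ω => (a' ω : ℝ) / c' ω | m] =ᵐ[μ] fun ω => (a ω : ℝ) / c ω := by
  have hc0' : ∀ ω, (0 : ℝ) < c ω := fun ω => Nat.cast_pos.mpr (hc0 ω)
  have hac' : ∀ ω, (a ω : ℝ) ≤ c ω := fun ω => Nat.cast_le.mpr (hac ω)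
  have hratio : ∀ ω, 0 ≤ (a ω : ℝ) / c ω ∧ (a ω : ℝ) / c ω ≤ 1 := fun ω =>
    ⟨by positivity, (div_le_one (hc0' ω)).mpr (hac' ω)⟩
  have hDk : Measurable Dk := measurable_of_eq_add (ha.mono hm le_rfl) ha' ha'_eq
  have hD : Measurable D := measurable_of_eq_add (hc.mono hm le_rfl) hc' hc'_eq
  have hY : Measurable fun ω => (Dk ω, D ω - Dk ω) := hDk.prodMk (hD.sub hDk)
  have ha_real : Measurable[m] fun ω => (a ω : ℝ) := measurable_from_top.comp ha
  have hc_real : Measurable[m] fun ω => (c ω : ℝ) := measurable_from_top.comp hc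
  have hgC : ∀ (ij : ℕ × ℕ) ω, ‖((a ω : ℝ) + ij.1) / ((c ω : ℝ) + ij.1 + ij.2)‖ ≤ 1 :=
    fun ij ω => by
      have := hc0' ω
      rw [Real.norm_of_nonneg (by positivity), div_le_one (by positivity)]
      linarith [hac' ω, (Nat.cast_nonneg ij.2 : (0 : ℝ) ≤ ij.2)]
  have hfg : ∀ ω, (a' ω : ℝ) / c' ω
      = ((a ω : ℝ) + Dk ω) / ((c ω : ℝ) + Dk ω + (D ω - Dk ω : ℕ)) := fun ω => by
    rw [ha'_eq, hc'_eq, Nat.cast_sub (hDkD ω)]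
    push_cast
    ring
  refine condExp_eq_of_fiberwise_hasSum hm hY (C := 1) ?_ hfg
    (fun ij => ((ha_real.add_const _).div ((hc_real.add_const _).add_const _)).stronglyMeasurable)
    hgC (fun ij => ?_) (fun ij ω => ?_) (fun ω => ?_) (ha_real.div hc_real).stronglyMeasurable
    (fun ω => hasSum_ratio_mul_poissonWeight (Nat.cast_nonneg _) (hac' ω) (hc0' ω) (hL0 ω))
  · refine .of_bound ((measurable_from_top.comp ha').div (measurable_from_top.comp hc')
      |>.aestronglyMeasurable) 1 (ae_of_all _ fun ω => ?_)
    rw [hfg]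
    exact hgC (Dk ω, D ω - Dk ω) ω
  · have hfiber : (fun ω => (Dk ω, D ω - Dk ω)) ⁻¹' {ij}
        = {ω | Dk ω = ij.1 ∧ D ω - Dk ω = ij.2} := Set.ext fun ω => Prod.ext_iff
    rw [hfiber]
    exact hpois ij.1 ij.2
  · exact mul_nonneg (poissonWeight_nonneg (mul_nonneg (hL0 ω) (hratio ω).1) _)
      (poissonWeight_nonneg (mul_nonneg (hL0 ω) (sub_nonneg.mpr (hratio ω).2)) _)
  · exact hasSum_poissonWeight_mul_poissonWeight (mul_nonneg (hL0 ω) (hratio ω).1)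
      (mul_nonneg (hL0 ω) (sub_nonneg.mpr (hratio ω).2))

end ConditionalExpectation

theorem edge_type_ratio_martingale_indep_edges_general
    {Ω : Type*} {m0 : MeasurableSpace Ω} (μ : Measure Ω) [IsProbabilityMeasure μ]
    (ℱ : Filtration ℕ m0) (𝒢 : ℕ → MeasurableSpace Ω)
    (h𝒢₁ : ∀ n, ℱ n ≤ 𝒢 (n + 1)) (h𝒢₂ : ∀ n, 𝒢 (n + 1) ≤ ℱ (n + 1))
    (lam : ℕ → Ω → ℝ) (Δ Δk : ℕ → Ω → ℕ) (e ek : ℕ → Ω → ℕ)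
    (hlampos : ∀ n ω, 0 < lam (n + 1) ω)
    (headapted : ∀ n, Measurable[ℱ n] (e n)) (hekadapted : ∀ n, Measurable[ℱ n] (ek n))
    (hepos : ∀ n ω, 0 < e n ω) (hle : ∀ n ω, ek n ω ≤ e n ω)
    (hΔle : ∀ n ω, Δk (n + 1) ω ≤ Δ (n + 1) ω)
    (hestep : ∀ n ω, e (n + 1) ω = e n ω + Δ (n + 1) ω)
    (hekstep : ∀ n ω, ek (n + 1) ω = ek n ω + Δk (n + 1) ω)
    (hpois : ∀ n, ∀ i j : ℕ,
      (μ⟦{ω | Δk (n + 1) ω = i ∧ Δ (n + 1) ω - Δk (n + 1) ω = j} | 𝒢 (n + 1)⟧)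
        =ᵐ[μ] fun ω =>
          (Real.exp (-(lam (n + 1) ω * ((ek n ω : ℝ) / (e n ω : ℝ)))) *
            (lam (n + 1) ω * ((ek n ω : ℝ) / (e n ω : ℝ))) ^ i / (i.factorial : ℝ)) *
          (Real.exp (-(lam (n + 1) ω * (1 - (ek n ω : ℝ) / (e n ω : ℝ)))) *
            (lam (n + 1) ω * (1 - (ek n ω : ℝ) / (e n ω : ℝ))) ^ j / (j.factorial : ℝ))) :
    (∀ n, μ[fun ω => (ek (n + 1) ω : ℝ) / (e (n + 1) ω : ℝ) | ℱ n]
        =ᵐ[μ] fun ω => (ek n ω : ℝ) / (e n ω : ℝ)) ∧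
    Martingale (fun n ω => (ek n ω : ℝ) / (e n ω : ℝ)) ℱ μ ∧
    ∃ ζ : Ω → ℝ, ∀ᵐ ω ∂μ,
      Tendsto (fun n => (ek n ω : ℝ) / (e n ω : ℝ)) atTop (nhds (ζ ω)) := by
  have hX_meas : ∀ n, StronglyMeasurable[ℱ n] fun ω => (ek n ω : ℝ) / (e n ω : ℝ) := fun n =>
    ((measurable_from_top.comp (hekadapted n)).div
      (measurable_from_top.comp (headapted n))).stronglyMeasurable
  have hX_le : ∀ n ω, ‖(ek n ω : ℝ) / (e n ω : ℝ)‖ ≤ 1 := fun n ω => by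
    rw [Real.norm_of_nonneg (by positivity), div_le_one (Nat.cast_pos.mpr (hepos n ω))]
    exact Nat.cast_le.mpr (hle n ω)
  have hX_int : ∀ n, Integrable (fun ω => (ek n ω : ℝ) / (e n ω : ℝ)) μ := fun n =>
    .of_bound ((hX_meas n).mono (ℱ.le n)).aestronglyMeasurable 1 (ae_of_all _ (hX_le n))
  have hone_step : ∀ n, μ[fun ω => (ek (n + 1) ω : ℝ) / (e (n + 1) ω : ℝ) | ℱ n]
      =ᵐ[μ] fun ω => (ek n ω : ℝ) / (e n ω : ℝ) := fun n => by
    have hm : 𝒢 (n + 1) ≤ m0 := (h𝒢₂ n).trans (ℱ.le (n + 1))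
    refine condExp_eq_of_condExp_eq_of_le (h𝒢₁ n) hm (hX_meas n) (hX_int n) ?_
    exact condExp_ratio_of_poisson_thinning hm (fun ω => (hlampos n ω).le)
      ((hekadapted n).mono (h𝒢₁ n) le_rfl) ((headapted n).mono (h𝒢₁ n) le_rfl) (hepos n) (hle n)
      ((hekadapted (n + 1)).mono (ℱ.le _) le_rfl) ((headapted (n + 1)).mono (ℱ.le _) le_rfl)
      (hekstep n) (hestep n) (hΔle n) (hpois n)
  have hmart : Martingale (fun n ω => (ek n ω : ℝ) / (e n ω : ℝ)) ℱ μ :=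
    martingale_nat hX_meas hX_int fun n => (hone_step n).symm
  exact ⟨hone_step, hmart, Submartingale.exists_ae_tendsto_of_norm_le hmart.submartingale hX_le⟩

/-- Edge-type ratio martingale in the model of independent edges: at step `n+1` the
number of new type-`k` edges `Δ^{(k)}_{n+1}` and the number of other new edges
`Δ_{n+1} - Δ^{(k)}_{n+1}` are, conditionally on `𝒢_{n+1} = σ(ℱ_n, λ_{n+1})`,
independent Poisson with parameters `λ_{n+1}·e_n^{(k)}/e_n` and
`λ_{n+1}·(1 - e_n^{(k)}/e_n)`. Then `E[e_{n+1}^{(k)}/e_{n+1} | ℱ_n] = e_n^{(k)}/e_n`,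
so the proportion of type-`k` edges is a nonnegative martingale and converges a.s. -/
theorem edge_type_ratio_martingale_indep_edges
    {Ω : Type*} {m0 : MeasurableSpace Ω} (μ : Measure Ω) [IsProbabilityMeasure μ]
    (ℱ : Filtration ℕ m0) (𝒢 : ℕ → MeasurableSpace Ω)
    (h𝒢₁ : ∀ n, ℱ n ≤ 𝒢 (n + 1)) (h𝒢₂ : ∀ n, 𝒢 (n + 1) ≤ ℱ (n + 1))
    (lam : ℕ → Ω → ℝ) (Δ Δk : ℕ → Ω → ℕ) (e ek : ℕ → Ω → ℕ)
    (hlammeas : ∀ n, Measurable[𝒢 (n + 1)] (lam (n + 1)))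
    (hlampos : ∀ n ω, 0 < lam (n + 1) ω)
    (hlamindep : ∀ n, Indep (MeasurableSpace.comap (lam (n + 1)) inferInstance) (ℱ n) μ)
    (headapted : ∀ n, Measurable[ℱ n] (e n)) (hekadapted : ∀ n, Measurable[ℱ n] (ek n))
    (hepos : ∀ n ω, 0 < e n ω) (hle : ∀ n ω, ek n ω ≤ e n ω)
    (hΔle : ∀ n ω, Δk (n + 1) ω ≤ Δ (n + 1) ω)
    (hestep : ∀ n ω, e (n + 1) ω = e n ω + Δ (n + 1) ω)
    (hekstep : ∀ n ω, ek (n + 1) ω = ek n ω + Δk (n + 1) ω)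
    (hpois : ∀ n, ∀ i j : ℕ,
      (μ⟦{ω | Δk (n + 1) ω = i ∧ Δ (n + 1) ω - Δk (n + 1) ω = j} | 𝒢 (n + 1)⟧)
        =ᵐ[μ] fun ω =>
          (Real.exp (-(lam (n + 1) ω * ((ek n ω : ℝ) / (e n ω : ℝ)))) *
            (lam (n + 1) ω * ((ek n ω : ℝ) / (e n ω : ℝ))) ^ i / (i.factorial : ℝ)) *
          (Real.exp (-(lam (n + 1) ω * (1 - (ek n ω : ℝ) / (e n ω : ℝ)))) *
            (lam (n + 1) ω * (1 - (ek n ω : ℝ) / (e n ω : ℝ))) ^ j / (j.factorial : ℝ))) :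
    (∀ n, μ[fun ω => (ek (n + 1) ω : ℝ) / (e (n + 1) ω : ℝ) | ℱ n]
        =ᵐ[μ] fun ω => (ek n ω : ℝ) / (e n ω : ℝ)) ∧
    Martingale (fun n ω => (ek n ω : ℝ) / (e n ω : ℝ)) ℱ μ ∧
    ∃ ζ : Ω → ℝ, ∀ᵐ ω ∂μ,
      Tendsto (fun n => (ek n ω : ℝ) / (e n ω : ℝ)) atTop (nhds (ζ ω)) :=
  edge_type_ratio_martingale_indep_edges_general μ ℱ 𝒢 h𝒢₁ h𝒢₂ lam Δ Δk e ek hlampos headapted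
    hekadapted hepos hle hΔle hestep hekstep hpois
end

section
/- Let M be a positive-integer-valued random variable and ζ ∈ [0,1] a random variable defined on the same probability space, and for l ≥ 0 set r_l = (2/(l+2))·E[C(M,l)·ζ^l·(1-ζ)^{M-l}]. Suppose there exists z > 1 with Σ_{l≥1} (E[M^l]/(l·l!))·z^l < ∞. Then Σ_{l≥1} r_l·z^l < ∞. -/
open MeasureTheory

/-- Summability of the immigration terms in the generalized Barabási–Albert degree
recurrence: if `Σ_{l≥1} (E[M^l]/(l·l!))·z^l < ∞` for some `z > 1`, then
`Σ_{l≥1} r_l·z^l < ∞`, where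
`r_l = (2/(l+2))·E[C(M,l)·ζ^l·(1-ζ)^{M-l}]`. -/
theorem immigration_terms_summable_BA
    {Ω : Type*} [MeasurableSpace Ω] (μ : Measure Ω) [IsProbabilityMeasure μ]
    (M : Ω → ℕ) (hMmeas : Measurable M) (hMpos : ∀ ω, 0 < M ω)
    (ζ : Ω → ℝ) (hζmeas : Measurable ζ) (hζ : ∀ ω, ζ ω ∈ Set.Icc (0 : ℝ) 1)
    (hint : ∀ l : ℕ, Integrable (fun ω => ((M ω : ℝ)) ^ l) μ)
    (z : ℝ) (hz : 1 < z)
    (hsum : Summable (fun l : ℕ =>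
      (∫ ω, ((M ω : ℝ)) ^ l ∂μ) / ((l : ℝ) * (l.factorial : ℝ)) * z ^ l)) :
    Summable (fun l : ℕ =>
      ((2 / ((l : ℝ) + 2)) *
        ∫ ω, ((M ω).choose l : ℝ) * ζ ω ^ l * (1 - ζ ω) ^ (M ω - l) ∂μ) * z ^ l) := by
  have hzpos : (0 : ℝ) < z := lt_trans one_pos hz
  -- pointwise facts
  have hnn : ∀ l : ℕ, ∀ ω, 0 ≤ ((M ω).choose l : ℝ) * ζ ω ^ l * (1 - ζ ω) ^ (M ω - l) := by
    intro l ω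
    have h1 := (hζ ω).1
    have h2 := (hζ ω).2
    have : (0:ℝ) ≤ 1 - ζ ω := by linarith
    positivity
  have hbound : ∀ l : ℕ, ∀ ω,
      ((M ω).choose l : ℝ) * ζ ω ^ l * (1 - ζ ω) ^ (M ω - l) ≤ (M ω : ℝ) ^ l / (l.factorial : ℝ) := by
    intro l ω
    have h1 := (hζ ω).1
    have h2 := (hζ ω).2
    have hz1 : ζ ω ^ l ≤ 1 := pow_le_one₀ h1 h2
    have hz1' : (0:ℝ) ≤ ζ ω ^ l := pow_nonneg h1 l
    have h1m : (0:ℝ) ≤ 1 - ζ ω := by linarith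
    have hz2 : (1 - ζ ω) ^ (M ω - l) ≤ 1 := pow_le_one₀ h1m (by linarith)
    have hz2' : (0:ℝ) ≤ (1 - ζ ω) ^ (M ω - l) := pow_nonneg h1m _
    have hch : ((M ω).choose l : ℝ) ≤ ((M ω : ℝ) ^ l) / (l.factorial : ℝ) := by
      have := Nat.choose_le_pow_div (α := ℝ) l (M ω)
      simpa using this
    have hchnn : (0:ℝ) ≤ ((M ω).choose l : ℝ) := Nat.cast_nonneg _
    calc ((M ω).choose l : ℝ) * ζ ω ^ l * (1 - ζ ω) ^ (M ω - l)
        ≤ ((M ω).choose l : ℝ) * 1 * 1 := by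
          apply mul_le_mul _ hz2 hz2' (by positivity)
          exact mul_le_mul le_rfl hz1 hz1' hchnn
      _ = ((M ω).choose l : ℝ) := by ring
      _ ≤ _ := hch
  have hmeas : ∀ l : ℕ, Measurable (fun ω =>
      ((M ω).choose l : ℝ) * ζ ω ^ l * (1 - ζ ω) ^ (M ω - l)) := by
    intro l
    have h1 : Measurable fun ω => ((M ω).choose l : ℝ) :=
      (measurable_from_top (f := fun n : ℕ => ((n.choose l : ℝ)))).comp hMmeas
    have h2 : Measurable fun ω => ζ ω ^ l := hζmeas.pow_const l
    have h3 : Measurable fun ω => (1 - ζ ω) ^ (M ω - l) :=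
      (measurable_const.sub hζmeas).pow (hMmeas.sub measurable_const)
    exact (h1.mul h2).mul h3
  have hgint : ∀ l : ℕ, Integrable (fun ω =>
      ((M ω).choose l : ℝ) * ζ ω ^ l * (1 - ζ ω) ^ (M ω - l)) μ := by
    intro l
    refine Integrable.mono' ((hint l).div_const (l.factorial : ℝ))
      (hmeas l).aestronglyMeasurable ?_
    filter_upwards with ω
    rw [Real.norm_eq_abs, abs_of_nonneg (hnn l ω)]
    exact hbound l ω
  have hM0 : ∀ l : ℕ, 0 ≤ ∫ ω, ((M ω : ℝ)) ^ l ∂μ := fun l =>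
    integral_nonneg fun ω => by positivity
  have key : ∀ l : ℕ, 1 ≤ l →
      ((2 / ((l : ℝ) + 2)) *
        ∫ ω, ((M ω).choose l : ℝ) * ζ ω ^ l * (1 - ζ ω) ^ (M ω - l) ∂μ) * z ^ l
      ≤ 2 * ((∫ ω, ((M ω : ℝ)) ^ l ∂μ) / ((l : ℝ) * (l.factorial : ℝ)) * z ^ l) := by
    intro l hl
    have hlR : (1:ℝ) ≤ (l:ℝ) := by exact_mod_cast hl
    have hIle : (∫ ω, ((M ω).choose l : ℝ) * ζ ω ^ l * (1 - ζ ω) ^ (M ω - l) ∂μ)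
        ≤ (∫ ω, ((M ω : ℝ)) ^ l ∂μ) / (l.factorial : ℝ) := by
      rw [← integral_div]
      exact integral_mono (hgint l) ((hint l).div_const _) (hbound l)
    have hfacpos : (0:ℝ) < (l.factorial : ℝ) := by
      exact_mod_cast l.factorial_pos
    have step1 : (2 / ((l : ℝ) + 2)) *
        (∫ ω, ((M ω).choose l : ℝ) * ζ ω ^ l * (1 - ζ ω) ^ (M ω - l) ∂μ)
        ≤ (2 / (l : ℝ)) * ((∫ ω, ((M ω : ℝ)) ^ l ∂μ) / (l.factorial : ℝ)) := by
      have h2 : (2 / ((l : ℝ) + 2)) ≤ 2 / (l : ℝ) := by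
        apply div_le_div_of_nonneg_left (by norm_num) (by linarith) (by linarith)
      have hInn : 0 ≤ ∫ ω, ((M ω).choose l : ℝ) * ζ ω ^ l * (1 - ζ ω) ^ (M ω - l) ∂μ :=
        integral_nonneg (hnn l)
      calc (2 / ((l : ℝ) + 2)) * _ ≤ (2 / (l : ℝ)) *
            (∫ ω, ((M ω).choose l : ℝ) * ζ ω ^ l * (1 - ζ ω) ^ (M ω - l) ∂μ) :=
            mul_le_mul_of_nonneg_right h2 hInn
        _ ≤ _ := mul_le_mul_of_nonneg_left hIle (by positivity)
    have heq : (2 / (l : ℝ)) * ((∫ ω, ((M ω : ℝ)) ^ l ∂μ) / (l.factorial : ℝ))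
        = 2 * ((∫ ω, ((M ω : ℝ)) ^ l ∂μ) / ((l : ℝ) * (l.factorial : ℝ))) := by
      field_simp
    have := mul_le_mul_of_nonneg_right step1 (le_of_lt (pow_pos hzpos l))
    rw [heq] at this
    calc _ ≤ 2 * ((∫ ω, ((M ω : ℝ)) ^ l ∂μ) / ((l : ℝ) * (l.factorial : ℝ))) * z ^ l := this
      _ = 2 * ((∫ ω, ((M ω : ℝ)) ^ l ∂μ) / ((l : ℝ) * (l.factorial : ℝ)) * z ^ l) := by ring
  rw [← summable_nat_add_iff 1]
  have hs2 : Summable (fun n : ℕ =>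
      2 * ((∫ ω, ((M ω : ℝ)) ^ (n+1) ∂μ) / (((n+1 : ℕ) : ℝ) * ((n+1).factorial : ℝ)) * z ^ (n+1))) :=
    ((summable_nat_add_iff 1).2 hsum).mul_left 2
  refine Summable.of_nonneg_of_le (fun n => ?_) (fun n => ?_) hs2
  · have hInn : 0 ≤ ∫ ω, ((M ω).choose (n+1) : ℝ) * ζ ω ^ (n+1) * (1 - ζ ω) ^ (M ω - (n+1)) ∂μ :=
      integral_nonneg (hnn (n+1))
    positivity
  · exact_mod_cast key (n+1) (Nat.le_add_left 1 n)
end
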